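/- Let T = (0,0,c₃,0,0,c₆,f₁,f₂,f₃,f₄,t₁,t₂) and T′ = (0,0,c₃,0,0,c₆,f₁′,f₂′,f₃′,f₄′,t₁′,t₂′) be tuples in ℤ¹² with c₁ = c₂ = c₄ = c₅ = 0 and the same values c₃ ≠ 0 and c₆ ≠ 0. Then T and T′ are ψ-equivalent if and only if: f₁ ≡ f₁′ (mod c₆); f₂ ≡ f₂′ (mod c₆); f₃ ≡ f₃′ (mod c₃); f₄ ≡ f₄′ (mod c₃); t₁ ≡ t₁′ (mod gcd(c₃,c₆,f₁,f₂,f₃,f₄)); and c₃c₆t₂ + c₃f₁f₂ + c₆f₃f₄ = c₃c₆t₂′ + c₃f₁′f₂′ + c₆f₃′f₄′ (equality of integers). -/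

import Mathlib

/-!
All moves fix the `cᵢ`. When `c₁ = c₂ = c₄ = c₅ = 0`, a move either adds `c₆` to `f₁` or `f₂`,
or `c₃` to `f₃` or `f₄` (changing `t₂` as well), or adds one of the `fᵢ` to `t₁`, and it preserves
`c₃c₆t₂ + c₃f₁f₂ + c₆f₃f₄`. So the residues of `f₁, f₂` mod `c₆` and of `f₃, f₄` mod `c₃` are
invariant, as is the quadratic form; and if `g` divides `c₃, c₆` and all `fᵢ`, it keeps doing so,
whence `t₁` mod `g` is invariant as well.

Conversely, iterating `ψ₃₂, ψ₄₁, ψ₁₄, ψ₂₃` moves each `fᵢ` anywhere in its residue class. The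
translations of `t₁` realisable with the `fᵢ` fixed form a subgroup of `ℤ`; it contains the `fᵢ`
(via `ψ₂₁, ψ₁₂, ψ₄₃, ψ₃₄`) and `c₆, c₃` (the commutators of `ψ₂₁` with `ψ₃₂` and of `ψ₄₃` with
`ψ₁₄`), hence their gcd. Finally `t₂` is determined by the quadratic invariant since `c₃c₆ ≠ 0`.
-/

/-- A 12-tuple of integers, with coordinates written `(c₁,…,c₆,f₁,…,f₄,t₁,t₂)`. -/
structure Tuple : Type where
  c1 : ℤ
  c2 : ℤ
  c3 : ℤ
  c4 : ℤ
  c5 : ℤ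
  c6 : ℤ
  f1 : ℤ
  f2 : ℤ
  f3 : ℤ
  f4 : ℤ
  t1 : ℤ
  t2 : ℤ

/-- The move ψ₂₁ : f₃↦f₃+c₅, f₄↦f₄−c₁, t₁↦t₁+f₁. -/
def psi21 : Equiv.Perm Tuple where
  toFun x := { x with f3 := x.f3 + x.c5, f4 := x.f4 - x.c1, t1 := x.t1 + x.f1 }
  invFun x := { x with f3 := x.f3 - x.c5, f4 := x.f4 + x.c1, t1 := x.t1 - x.f1 }
  left_inv x := by cases x; simp
  right_inv x := by cases x; simp

/-- The move ψ₄₁ : f₂↦f₂+c₆, f₃↦f₃−c₅, t₂↦t₂−f₁. -/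
def psi41 : Equiv.Perm Tuple where
  toFun x := { x with f2 := x.f2 + x.c6, f3 := x.f3 - x.c5, t2 := x.t2 - x.f1 }
  invFun x := { x with f2 := x.f2 - x.c6, f3 := x.f3 + x.c5, t2 := x.t2 + x.f1 }
  left_inv x := by cases x; simp
  right_inv x := by cases x; simp

/-- The move ψ₁₂ : f₃↦f₃−c₄, f₄↦f₄+c₂, t₁↦t₁+f₂. -/
def psi12 : Equiv.Perm Tuple where
  toFun x := { x with f3 := x.f3 - x.c4, f4 := x.f4 + x.c2, t1 := x.t1 + x.f2 }
  invFun x := { x with f3 := x.f3 + x.c4, f4 := x.f4 - x.c2, t1 := x.t1 - x.f2 }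
  left_inv x := by cases x; simp
  right_inv x := by cases x; simp

/-- The move ψ₃₂ : f₁↦f₁+c₆, f₄↦f₄−c₂, t₂↦t₂−f₂. -/
def psi32 : Equiv.Perm Tuple where
  toFun x := { x with f1 := x.f1 + x.c6, f4 := x.f4 - x.c2, t2 := x.t2 - x.f2 }
  invFun x := { x with f1 := x.f1 - x.c6, f4 := x.f4 + x.c2, t2 := x.t2 + x.f2 }
  left_inv x := by cases x; simp
  right_inv x := by cases x; simp

/-- The move ψ₄₃ : f₁↦f₁+c₅, f₂↦f₂−c₄, t₁↦t₁+f₃. -/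
def psi43 : Equiv.Perm Tuple where
  toFun x := { x with f1 := x.f1 + x.c5, f2 := x.f2 - x.c4, t1 := x.t1 + x.f3 }
  invFun x := { x with f1 := x.f1 - x.c5, f2 := x.f2 + x.c4, t1 := x.t1 - x.f3 }
  left_inv x := by cases x; simp
  right_inv x := by cases x; simp

/-- The move ψ₂₃ : f₁↦f₁−c₅, f₄↦f₄+c₃, t₂↦t₂−f₃. -/
def psi23 : Equiv.Perm Tuple where
  toFun x := { x with f1 := x.f1 - x.c5, f4 := x.f4 + x.c3, t2 := x.t2 - x.f3 }
  invFun x := { x with f1 := x.f1 + x.c5, f4 := x.f4 - x.c3, t2 := x.t2 + x.f3 }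
  left_inv x := by cases x; simp
  right_inv x := by cases x; simp

/-- The move ψ₃₄ : f₁↦f₁−c₁, f₂↦f₂+c₂, t₁↦t₁+f₄. -/
def psi34 : Equiv.Perm Tuple where
  toFun x := { x with f1 := x.f1 - x.c1, f2 := x.f2 + x.c2, t1 := x.t1 + x.f4 }
  invFun x := { x with f1 := x.f1 + x.c1, f2 := x.f2 - x.c2, t1 := x.t1 - x.f4 }
  left_inv x := by cases x; simp
  right_inv x := by cases x; simp

/-- The move ψ₁₄ : f₂↦f₂−c₂, f₃↦f₃+c₃, t₂↦t₂−f₄. -/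
def psi14 : Equiv.Perm Tuple where
  toFun x := { x with f2 := x.f2 - x.c2, f3 := x.f3 + x.c3, t2 := x.t2 - x.f4 }
  invFun x := { x with f2 := x.f2 + x.c2, f3 := x.f3 - x.c3, t2 := x.t2 + x.f4 }
  left_inv x := by cases x; simp
  right_inv x := by cases x; simp

/-- The list of the eight ψ-moves. -/
def psiMoves : List (Equiv.Perm Tuple) :=
  [psi21, psi41, psi12, psi32, psi43, psi23, psi34, psi14]

/-- Two tuples are ψ-equivalent if one is obtained from the other by a finite
composition of the eight ψ-moves and their inverses, i.e. they are related by the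
equivalence relation generated by single applications of the moves. -/
def PsiEquiv : Tuple → Tuple → Prop :=
  Relation.EqvGen (fun x y => ∃ g ∈ psiMoves, g x = y)

theorem Relation.EqvGen.eq_of_invariant {α β : Type*} {r : α → α → Prop} {p : α → Prop}
    {φ : α → β} (hp : ∀ x y, r x y → (p x ↔ p y)) (hφ : ∀ x y, r x y → p x → φ x = φ y)
    {x y : α} (h : Relation.EqvGen r x y) (hx : p x) : φ x = φ y := by
  suffices (p x ↔ p y) ∧ (p x → φ x = φ y) from this.2 hx
  clear hx
  induction h with
  | rel x y hxy => exact ⟨hp x y hxy, hφ x y hxy⟩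
  | refl => exact ⟨Iff.rfl, fun _ => rfl⟩
  | symm x y _ ih => exact ⟨ih.1.symm, fun hy => (ih.2 (ih.1.2 hy)).symm⟩
  | trans x y z _ _ ih₁ ih₂ =>
    exact ⟨ih₁.1.trans ih₂.1, fun hx => (ih₁.2 hx).trans (ih₂.2 (ih₁.1.1 hx))⟩

theorem Relation.EqvGen.of_forall_succ {α : Type*} {r : α → α → Prop} (F : ℤ → α)
    (h : ∀ k, Relation.EqvGen r (F k) (F (k + 1))) (n : ℤ) : Relation.EqvGen r (F 0) (F n) := by
  induction n using Int.induction_on with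
  | zero => exact .refl _
  | succ k ih => exact ih.trans _ _ _ (h k)
  | pred k ih => exact ih.trans _ _ _ (.symm _ _ (by simpa using h (-k - 1)))

theorem Int.gcd_mem {H : AddSubgroup ℤ} {a b : ℤ} (ha : a ∈ H) (hb : b ∈ H) :
    (Int.gcd a b : ℤ) ∈ H := by
  rw [Int.gcd_eq_gcd_ab, mul_comm a, mul_comm b]
  exact add_mem (zsmul_mem ha _) (zsmul_mem hb _)

namespace Tuple

def ofC3C6 (c3 c6 f1 f2 f3 f4 t1 t2 : ℤ) : Tuple :=
  ⟨0, 0, c3, 0, 0, c6, f1, f2, f3, f4, t1, t2⟩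

def IsC3C6 (x : Tuple) : Prop := x.c1 = 0 ∧ x.c2 = 0 ∧ x.c4 = 0 ∧ x.c5 = 0

def DvdContent (g : ℤ) (x : Tuple) : Prop :=
  g ∣ x.c3 ∧ g ∣ x.c6 ∧ g ∣ x.f1 ∧ g ∣ x.f2 ∧ g ∣ x.f3 ∧ g ∣ x.f4

def quad (x : Tuple) : ℤ := x.c3 * x.c6 * x.t2 + x.c3 * x.f1 * x.f2 + x.c6 * x.f3 * x.f4

def invariants (g : ℤ) (x : Tuple) : ℤ × ℤ × ℤ × ℤ × ℤ × ℤ :=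
  (x.f1 % x.c6, x.f2 % x.c6, x.f3 % x.c3, x.f4 % x.c3, x.t1 % g, x.quad)

theorem isC3C6_move_iff {m : Equiv.Perm Tuple} (hm : m ∈ psiMoves) (x : Tuple) :
    (m x).IsC3C6 ↔ x.IsC3C6 := by
  simp only [psiMoves, List.mem_cons, List.not_mem_nil, or_false] at hm
  rcases hm with rfl | rfl | rfl | rfl | rfl | rfl | rfl | rfl <;> exact Iff.rfl

theorem dvdContent_move_iff {m : Equiv.Perm Tuple} (hm : m ∈ psiMoves) {x : Tuple}
    (hx : x.IsC3C6) (g : ℤ) : (m x).DvdContent g ↔ x.DvdContent g := by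
  obtain ⟨c1, c2, c3, c4, c5, c6, f1, f2, f3, f4, t1, t2⟩ := x
  obtain ⟨rfl, rfl, rfl, rfl⟩ := hx
  simp only [psiMoves, List.mem_cons, List.not_mem_nil, or_false] at hm
  rcases hm with rfl | rfl | rfl | rfl | rfl | rfl | rfl | rfl <;>
    simp +contextual [psi21, psi41, psi12, psi32, psi43, psi23, psi34, psi14, DvdContent,
      dvd_add_left]

theorem invariants_move {m : Equiv.Perm Tuple} (hm : m ∈ psiMoves) {x : Tuple} {g : ℤ}
    (hx : x.IsC3C6) (hg : x.DvdContent g) : (m x).invariants g = x.invariants g := by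
  obtain ⟨c1, c2, c3, c4, c5, c6, f1, f2, f3, f4, t1, t2⟩ := x
  obtain ⟨rfl, rfl, rfl, rfl⟩ := hx
  obtain ⟨-, -, ⟨k1, rfl⟩, ⟨k2, rfl⟩, ⟨k3, rfl⟩, ⟨k4, rfl⟩⟩ := hg
  simp only [psiMoves, List.mem_cons, List.not_mem_nil, or_false] at hm
  rcases hm with rfl | rfl | rfl | rfl | rfl | rfl | rfl | rfl <;>
    simp [psi21, psi41, psi12, psi32, psi43, psi23, psi34, psi14, invariants, quad] <;> ring

theorem dvdContent_ofC3C6_gcd (c3 c6 f1 f2 f3 f4 t1 t2 : ℤ) :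
    (ofC3C6 c3 c6 f1 f2 f3 f4 t1 t2).DvdContent
      (Int.gcd c3 (Int.gcd c6 (Int.gcd f1 (Int.gcd f2 (Int.gcd f3 f4))))) := by
  have h := dvd_refl (Int.gcd c3 (Int.gcd c6 (Int.gcd f1 (Int.gcd f2 (Int.gcd f3 f4)))) : ℤ)
  simp only [Int.dvd_coe_gcd_iff] at h
  exact h

end Tuple

namespace PsiEquiv

theorem refl (x : Tuple) : PsiEquiv x x := Relation.EqvGen.refl x

theorem symm {x y : Tuple} (h : PsiEquiv x y) : PsiEquiv y x := Relation.EqvGen.symm _ _ h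

theorem trans {x y z : Tuple} (h : PsiEquiv x y) (h' : PsiEquiv y z) : PsiEquiv x z :=
  Relation.EqvGen.trans _ _ _ h h'

theorem move {m : Equiv.Perm Tuple} (hm : m ∈ psiMoves) (x : Tuple) : PsiEquiv x (m x) :=
  .rel _ _ ⟨m, hm, rfl⟩

theorem invariants_eq {x y : Tuple} {g : ℤ} (h : PsiEquiv x y) (hx : x.IsC3C6)
    (hg : x.DvdContent g) : x.invariants g = y.invariants g := by
  refine Relation.EqvGen.eq_of_invariant (p := fun x => x.IsC3C6 ∧ x.DvdContent g)
    ?_ ?_ h ⟨hx, hg⟩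
  · rintro x - ⟨m, hm, rfl⟩
    rw [Tuple.isC3C6_move_iff hm]
    exact and_congr_right fun hx => (Tuple.dvdContent_move_iff hm hx g).symm
  · rintro x - ⟨m, hm, rfl⟩ ⟨hx, hg⟩
    exact (Tuple.invariants_move hm hx hg).symm

theorem quad_eq {x y : Tuple} (h : PsiEquiv x y) (hx : x.IsC3C6) : x.quad = y.quad :=
  congrArg (fun i => i.2.2.2.2.2) <| h.invariants_eq (g := 1) hx <| by
    simp [Tuple.DvdContent]

theorem of_move_succ {m : Equiv.Perm Tuple} (hm : m ∈ psiMoves) (F : ℤ → Tuple)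
    (hF : ∀ k, m (F k) = F (k + 1)) (n : ℤ) : PsiEquiv (F 0) (F n) :=
  Relation.EqvGen.of_forall_succ F (fun k => hF k ▸ move hm _) n

end PsiEquiv

open Tuple PsiEquiv

section Construction

variable (c3 c6 f1 f2 f3 f4 t1 t2 : ℤ)

theorem psiEquiv_shift_f1 (n : ℤ) :
    PsiEquiv (ofC3C6 c3 c6 f1 f2 f3 f4 t1 t2)
      (ofC3C6 c3 c6 (f1 + n * c6) f2 f3 f4 t1 (t2 - n * f2)) := by
  simpa using of_move_succ (m := psi32) (by simp [psiMoves])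
    (fun k => ofC3C6 c3 c6 (f1 + k * c6) f2 f3 f4 t1 (t2 - k * f2))
    (fun k => by simp [psi32, ofC3C6]; constructor <;> ring) n

theorem psiEquiv_shift_f2 (n : ℤ) :
    PsiEquiv (ofC3C6 c3 c6 f1 f2 f3 f4 t1 t2)
      (ofC3C6 c3 c6 f1 (f2 + n * c6) f3 f4 t1 (t2 - n * f1)) := by
  simpa using of_move_succ (m := psi41) (by simp [psiMoves])
    (fun k => ofC3C6 c3 c6 f1 (f2 + k * c6) f3 f4 t1 (t2 - k * f1))
    (fun k => by simp [psi41, ofC3C6]; constructor <;> ring) n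

theorem psiEquiv_shift_f3 (n : ℤ) :
    PsiEquiv (ofC3C6 c3 c6 f1 f2 f3 f4 t1 t2)
      (ofC3C6 c3 c6 f1 f2 (f3 + n * c3) f4 t1 (t2 - n * f4)) := by
  simpa using of_move_succ (m := psi14) (by simp [psiMoves])
    (fun k => ofC3C6 c3 c6 f1 f2 (f3 + k * c3) f4 t1 (t2 - k * f4))
    (fun k => by simp [psi14, ofC3C6]; constructor <;> ring) n

theorem psiEquiv_shift_f4 (n : ℤ) :
    PsiEquiv (ofC3C6 c3 c6 f1 f2 f3 f4 t1 t2)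
      (ofC3C6 c3 c6 f1 f2 f3 (f4 + n * c3) t1 (t2 - n * f3)) := by
  simpa using of_move_succ (m := psi23) (by simp [psiMoves])
    (fun k => ofC3C6 c3 c6 f1 f2 f3 (f4 + k * c3) t1 (t2 - k * f3))
    (fun k => by simp [psi23, ofC3C6]; constructor <;> ring) n

theorem exists_psiEquiv_shift_f (k1 k2 k3 k4 : ℤ) :
    ∃ t2', PsiEquiv (ofC3C6 c3 c6 f1 f2 f3 f4 t1 t2)
      (ofC3C6 c3 c6 (f1 + k1 * c6) (f2 + k2 * c6) (f3 + k3 * c3) (f4 + k4 * c3) t1 t2') :=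
  ⟨_, (psiEquiv_shift_f1 ..).trans <| (psiEquiv_shift_f2 ..).trans <|
    (psiEquiv_shift_f3 ..).trans (psiEquiv_shift_f4 ..)⟩

end Construction

def t1Shifts (c3 c6 f1 f2 f3 f4 : ℤ) : AddSubgroup ℤ where
  carrier := {d | ∀ t1 t2, PsiEquiv (ofC3C6 c3 c6 f1 f2 f3 f4 t1 t2)
    (ofC3C6 c3 c6 f1 f2 f3 f4 (t1 + d) t2)}
  zero_mem' t1 t2 := by simpa using PsiEquiv.refl _
  add_mem' {a b} ha hb t1 t2 := (ha t1 t2).trans (by simpa [add_assoc] using hb (t1 + a) t2)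
  neg_mem' {a} ha t1 t2 := by simpa [← sub_eq_add_neg] using (ha (t1 - a) t2).symm

section t1Shifts

variable {c3 c6 f1 f2 f3 f4 : ℤ}

theorem mem_t1Shifts_of_move {m : Equiv.Perm Tuple} (hm : m ∈ psiMoves) {d : ℤ}
    (hd : ∀ t1 t2, m (ofC3C6 c3 c6 f1 f2 f3 f4 t1 t2) = ofC3C6 c3 c6 f1 f2 f3 f4 (t1 + d) t2) :
    d ∈ t1Shifts c3 c6 f1 f2 f3 f4 :=
  fun t1 t2 => hd t1 t2 ▸ move hm _

theorem mem_t1Shifts_of_commute {m m' : Equiv.Perm Tuple} (hm : m ∈ psiMoves) (hm' : m' ∈ psiMoves)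
    {d : ℤ} (hd : ∀ t1 t2, m (m' (ofC3C6 c3 c6 f1 f2 f3 f4 t1 t2)) =
      m' (m (ofC3C6 c3 c6 f1 f2 f3 f4 (t1 + d) t2))) :
    d ∈ t1Shifts c3 c6 f1 f2 f3 f4 := fun t1 t2 =>
  ((move hm' _).trans (move hm _)).trans <| hd t1 t2 ▸ ((move hm _).trans (move hm' _)).symm

theorem mem_t1Shifts_of_gcd_dvd {d : ℤ}
    (hd : (Int.gcd c3 (Int.gcd c6 (Int.gcd f1 (Int.gcd f2 (Int.gcd f3 f4)))) : ℤ) ∣ d) :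
    d ∈ t1Shifts c3 c6 f1 f2 f3 f4 := by
  obtain ⟨k, rfl⟩ := hd
  rw [mul_comm, ← smul_eq_mul]
  refine zsmul_mem (Int.gcd_mem ?c3 <| Int.gcd_mem ?c6 <| Int.gcd_mem ?f1 <| Int.gcd_mem ?f2 <|
    Int.gcd_mem ?f3 ?f4) k
  case c3 =>
    exact mem_t1Shifts_of_commute (m := psi43) (m' := psi14) (by simp [psiMoves])
      (by simp [psiMoves]) fun _ _ => by simp [psi43, psi14, ofC3C6]; ring
  case c6 =>
    exact mem_t1Shifts_of_commute (m := psi21) (m' := psi32) (by simp [psiMoves])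
      (by simp [psiMoves]) fun _ _ => by simp [psi21, psi32, ofC3C6]; ring
  case f1 =>
    exact mem_t1Shifts_of_move (m := psi21) (by simp [psiMoves]) fun _ _ => by simp [psi21, ofC3C6]
  case f2 =>
    exact mem_t1Shifts_of_move (m := psi12) (by simp [psiMoves]) fun _ _ => by simp [psi12, ofC3C6]
  case f3 =>
    exact mem_t1Shifts_of_move (m := psi43) (by simp [psiMoves]) fun _ _ => by simp [psi43, ofC3C6]
  case f4 =>
    exact mem_t1Shifts_of_move (m := psi34) (by simp [psiMoves]) fun _ _ => by simp [psi34, ofC3C6]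

end t1Shifts

theorem PsiEquiv.ofC3C6_of_quad_eq {x : Tuple} (hx : x.IsC3C6) {c3 c6 f1 f2 f3 f4 t1 t2 t2' : ℤ}
    (hc : c3 * c6 ≠ 0) (h : PsiEquiv x (ofC3C6 c3 c6 f1 f2 f3 f4 t1 t2'))
    (hq : x.quad = (ofC3C6 c3 c6 f1 f2 f3 f4 t1 t2).quad) :
    PsiEquiv x (ofC3C6 c3 c6 f1 f2 f3 f4 t1 t2) := by
  have ht2 : t2' = t2 := mul_left_cancel₀ hc <| by
    have := (h.quad_eq hx).symm.trans hq
    simp only [quad, ofC3C6] at this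
    linarith
  exact ht2 ▸ h

/-- Classification when c₁ = c₂ = c₄ = c₅ = 0 and c₃, c₆ ≠ 0: two such tuples are
ψ-equivalent iff f₁ ≡ f₁′ (mod c₆), f₂ ≡ f₂′ (mod c₆), f₃ ≡ f₃′ (mod c₃),
f₄ ≡ f₄′ (mod c₃), t₁ ≡ t₁′ (mod gcd(c₃,c₆,f₁,f₂,f₃,f₄)), and
c₃c₆t₂+c₃f₁f₂+c₆f₃f₄ = c₃c₆t₂′+c₃f₁′f₂′+c₆f₃′f₄′ as integers. -/
theorem classification_c3_c6 (c3 c6 f1 f2 f3 f4 t1 t2 f1' f2' f3' f4' t1' t2' : ℤ)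
    (hc3 : c3 ≠ 0) (hc6 : c6 ≠ 0) :
    PsiEquiv ⟨0, 0, c3, 0, 0, c6, f1, f2, f3, f4, t1, t2⟩
        ⟨0, 0, c3, 0, 0, c6, f1', f2', f3', f4', t1', t2'⟩ ↔
      (c6 ∣ f1 - f1' ∧
        c6 ∣ f2 - f2' ∧
        c3 ∣ f3 - f3' ∧
        c3 ∣ f4 - f4' ∧
        (Int.gcd c3 (Int.gcd c6 (Int.gcd f1 (Int.gcd f2 (Int.gcd f3 f4)))) : ℤ) ∣
          t1 - t1' ∧
        c3 * c6 * t2 + c3 * f1 * f2 + c6 * f3 * f4 =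
          c3 * c6 * t2' + c3 * f1' * f2' + c6 * f3' * f4') := by
  constructor
  · intro h
    have hinv :=
      h.invariants_eq ⟨rfl, rfl, rfl, rfl⟩ (dvdContent_ofC3C6_gcd c3 c6 f1 f2 f3 f4 t1 t2)
    simp only [invariants, Prod.mk.injEq] at hinv
    obtain ⟨h1, h2, h3, h4, h5, hq⟩ := hinv
    exact ⟨Int.ModEq.dvd h1.symm, Int.ModEq.dvd h2.symm, Int.ModEq.dvd h3.symm,
      Int.ModEq.dvd h4.symm, Int.ModEq.dvd h5.symm, hq⟩
  · rintro ⟨⟨k1, hk1⟩, ⟨k2, hk2⟩, ⟨k3, hk3⟩, ⟨k4, hk4⟩, ht1, hq⟩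
    obtain rfl : f1' = f1 + -k1 * c6 := by linarith
    obtain rfl : f2' = f2 + -k2 * c6 := by linarith
    obtain rfl : f3' = f3 + -k3 * c3 := by linarith
    obtain rfl : f4' = f4 + -k4 * c3 := by linarith
    have hshift := mem_t1Shifts_of_gcd_dvd (dvd_sub_comm.mp ht1) t1 t2
    rw [add_sub_cancel] at hshift
    obtain ⟨t2'', hf⟩ := exists_psiEquiv_shift_f c3 c6 f1 f2 f3 f4 t1' t2 (-k1) (-k2) (-k3) (-k4)
    exact ofC3C6_of_quad_eq ⟨rfl, rfl, rfl, rfl⟩ (mul_ne_zero hc3 hc6) (hshift.trans hf) hq
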